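/- Let E_2 be the two-dimensional complex evolution algebra with structural matrix ((1,0),(1,0)) (i.e. e₁e₁ = e₁, e₂e₂ = e₁). A linear map P : ℂ² → ℂ² is a Rota–Baxter operator of weight 1 on E_2 if and only if its matrix is one of the following, for some c ∈ ℂ: ((0,0),(c, ic)); ((0,0),(c, −ic)); ((−1/2, i/2),(−i/2, −1/2)); ((−1/2, −i/2),(i/2, −1/2)); ((−1, 0),(c, −1 + ic)); ((−1, 0),(c, −1 − ic)). -/

import Mathlib

/-- The evolution-algebra product on `ℂ²` determined by a structural matrix `A`:
`e_i · e_i = a_{i1} e₁ + a_{i2} e₂` and `e₁ · e₂ = e₂ · e₁ = 0`. -/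
noncomputable def evMulC (A : Matrix (Fin 2) (Fin 2) ℂ) (x y : Fin 2 → ℂ) : Fin 2 → ℂ :=
  fun k => x 0 * y 0 * A 0 k + x 1 * y 1 * A 1 k

/-- `P` is a Rota–Baxter operator of weight `lam` on the evolution algebra with structural
matrix `A`: `P(x)·P(y) = P(x·P(y) + P(x)·y + lam x·y)` for all `x, y`. -/
def IsRotaBaxter (A : Matrix (Fin 2) (Fin 2) ℂ) (lam : ℂ)
    (P : (Fin 2 → ℂ) →ₗ[ℂ] (Fin 2 → ℂ)) : Prop :=
  ∀ x y : Fin 2 → ℂ,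
    evMulC A (P x) (P y) = P (evMulC A x (P y) + evMulC A (P x) y + lam • evMulC A x y)

/-!
Both sides of the Rota–Baxter identity are bilinear in `(x, y)`, so it suffices to check it on
pairs of basis vectors. In `E₂` every product is `x · y = (x ⬝ᵥ y) e₁`, so writing
`P e₁ = (a, b)`, `P e₂ = (c, d)` the identity becomes six polynomial equations. If `b ≠ 0` they
force `a = d = -λ/2`, `c = -b` and `a² + b² = 0`; if `b = 0` they reduce to `a (a + λ) = 0` and
`c² + d² = (2d + λ) a`. Over `ℂ` a sum of two squares factors as `y² + x² = (y - i x)(y + i x)`,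
which produces the six families.
-/

open Matrix Complex

noncomputable def evMulCBilin (A : Matrix (Fin 2) (Fin 2) ℂ) :
    (Fin 2 → ℂ) →ₗ[ℂ] (Fin 2 → ℂ) →ₗ[ℂ] (Fin 2 → ℂ) :=
  LinearMap.mk₂ ℂ (evMulC A)
    (fun _ _ _ => by ext; simp only [evMulC, Pi.add_apply]; ring)
    (fun _ _ _ => by ext; simp only [evMulC, Pi.smul_apply, smul_eq_mul]; ring)
    (fun _ _ _ => by ext; simp only [evMulC, Pi.add_apply]; ring)
    (fun _ _ _ => by ext; simp only [evMulC, Pi.smul_apply, smul_eq_mul]; ring)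

@[simp]
theorem evMulCBilin_apply (A : Matrix (Fin 2) (Fin 2) ℂ) (x y : Fin 2 → ℂ) :
    evMulCBilin A x y = evMulC A x y := rfl

theorem isRotaBaxter_iff_forall_single (A : Matrix (Fin 2) (Fin 2) ℂ) (lam : ℂ)
    (P : (Fin 2 → ℂ) →ₗ[ℂ] (Fin 2 → ℂ)) :
    IsRotaBaxter A lam P ↔ ∀ i j : Fin 2,
      evMulC A (P (Pi.single i 1)) (P (Pi.single j 1)) =
        P (evMulC A (Pi.single i 1) (P (Pi.single j 1)) +
          evMulC A (P (Pi.single i 1)) (Pi.single j 1) +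
            lam • evMulC A (Pi.single i 1) (Pi.single j 1)) := by
  let B := evMulCBilin A
  have hbilin : IsRotaBaxter A lam P ↔
      B.compl₁₂ P P = (B.compl₂ P + B.comp P + lam • B).compr₂ P := by
    simp [IsRotaBaxter, LinearMap.ext_iff, B]
  rw [hbilin, LinearMap.ext_iff_basis (Pi.basisFun ℂ (Fin 2)) (Pi.basisFun ℂ (Fin 2))]
  simp [B]

theorem evMulC_E2_eq_dotProduct_smul (x y : Fin 2 → ℂ) :
    evMulC !![1, 0; 1, 0] x y = (x ⬝ᵥ y) • Pi.single 0 1 := by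
  ext k; fin_cases k <;> simp [evMulC, dotProduct, Fin.sum_univ_two]

/-- The Rota–Baxter identity of weight `lam` on `E₂` at the basis pairs `(e₁, e₁)`, `(e₁, e₂)`,
`(e₂, e₂)`, first and second coordinate, for `P e₁ = (a, b)` and `P e₂ = (c, d)`. -/
def E2RotaBaxterEqns (lam a b c d : ℂ) : Prop :=
  a ^ 2 + b ^ 2 = (2 * a + lam) * a ∧ (2 * a + lam) * b = 0 ∧
  a * c + b * d = (b + c) * a ∧ (b + c) * b = 0 ∧
  c ^ 2 + d ^ 2 = (2 * d + lam) * a ∧ (2 * d + lam) * b = 0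

theorem isRotaBaxter_E2_iff_eqns (lam : ℂ) (P : (Fin 2 → ℂ) →ₗ[ℂ] (Fin 2 → ℂ)) :
    IsRotaBaxter !![1, 0; 1, 0] lam P ↔
      E2RotaBaxterEqns lam (P ![1, 0] 0) (P ![1, 0] 1) (P ![0, 1] 0) (P ![0, 1] 1) := by
  have he₁ : (Pi.single 0 1 : Fin 2 → ℂ) = ![1, 0] := by ext i; fin_cases i <;> rfl
  have he₂ : (Pi.single 1 1 : Fin 2 → ℂ) = ![0, 1] := by ext i; fin_cases i <;> rfl
  simp only [isRotaBaxter_iff_forall_single, evMulC_E2_eq_dotProduct_smul, ← add_smul, smul_smul,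
    map_smul, Fin.forall_fin_two, he₁, he₂, funext_iff, dotProduct, Fin.sum_univ_two,
    Pi.smul_apply, cons_val_zero, cons_val_one, cons_val_fin_one, smul_eq_mul, mul_one, one_mul, mul_zero, zero_eq_mul, add_zero, E2RotaBaxterEqns, mul_eq_zero]
  grind

theorem sq_add_sq_eq_zero_iff (x y : ℂ) : x ^ 2 + y ^ 2 = 0 ↔ y = I * x ∨ y = -I * x := by
  have h : x ^ 2 + y ^ 2 = (y - I * x) * (y + I * x) := by linear_combination x ^ 2 * I_sq
  rw [h, mul_eq_zero, sub_eq_zero, add_eq_zero_iff_eq_neg, neg_mul]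

theorem e2RotaBaxterEqns_iff {lam a b c d : ℂ} :
    E2RotaBaxterEqns lam a b c d ↔
      (a = 0 ∧ b = 0 ∧ (d = I * c ∨ d = -I * c)) ∨
      (a = -(lam / 2) ∧ c = -b ∧ d = -(lam / 2) ∧ (b = I * lam / 2 ∨ b = -I * lam / 2)) ∨
      (a = -lam ∧ b = 0 ∧ (d = -lam + I * c ∨ d = -lam - I * c)) := by
  constructor
  · rintro ⟨h₁, h₂, -, h₄, h₅, h₆⟩
    rcases eq_or_ne b 0 with rfl | hb
    · have ha : a * (a + lam) = 0 := by linear_combination -h₁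
      rcases mul_eq_zero.1 ha with rfl | ha
      · have hcd : c ^ 2 + d ^ 2 = 0 := by linear_combination h₅
        exact .inl ⟨rfl, rfl, (sq_add_sq_eq_zero_iff c d).1 hcd⟩
      · obtain rfl : a = -lam := eq_neg_of_add_eq_zero_left ha
        have hcd : c ^ 2 + (d + lam) ^ 2 = 0 := by linear_combination h₅
        refine .inr (.inr ⟨rfl, rfl, ?_⟩)
        rcases (sq_add_sq_eq_zero_iff c _).1 hcd with h | h
        exacts [.inl (by linear_combination h), .inr (by linear_combination h)]
    · have ha : 2 * a + lam = 0 := (mul_eq_zero.1 h₂).resolve_right hb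
      have hc : b + c = 0 := (mul_eq_zero.1 h₄).resolve_right hb
      have hd : 2 * d + lam = 0 := (mul_eq_zero.1 h₆).resolve_right hb
      have hab : a ^ 2 + b ^ 2 = 0 := by linear_combination h₁ + a * ha
      refine .inr (.inl ⟨by linear_combination ha / 2, by linear_combination hc,
        by linear_combination hd / 2, ?_⟩)
      rcases (sq_add_sq_eq_zero_iff a b).1 hab with h | h
      exacts [.inr (by linear_combination h + I * ha / 2),
        .inl (by linear_combination h - I * ha / 2)]
  · rintro (⟨rfl, rfl, hd⟩ | ⟨rfl, rfl, rfl, hb⟩ | ⟨rfl, rfl, hd⟩)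
    · have hcd := (sq_add_sq_eq_zero_iff c d).2 hd
      exact ⟨by ring, by ring, by ring, by ring, by linear_combination hcd, by ring⟩
    · have hb' : (-(lam / 2)) ^ 2 + b ^ 2 = 0 := (sq_add_sq_eq_zero_iff _ b).2
        (hb.symm.imp (fun h => by linear_combination h) (fun h => by linear_combination h))
      exact ⟨by linear_combination hb', by ring, by ring, by ring, by linear_combination hb',
        by ring⟩
    · have hcd : c ^ 2 + (d + lam) ^ 2 = 0 := (sq_add_sq_eq_zero_iff c _).2
        (hd.imp (fun h => by linear_combination h) (fun h => by linear_combination h))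
      exact ⟨by ring, by ring, by ring, by ring, by linear_combination hcd, by ring⟩

theorem isRotaBaxter_E2_iff (lam : ℂ) (P : (Fin 2 → ℂ) →ₗ[ℂ] (Fin 2 → ℂ)) :
    IsRotaBaxter !![1, 0; 1, 0] lam P ↔ ∃ c : ℂ,
      (P ![1, 0] = ![0, 0] ∧ P ![0, 1] = ![c, I * c]) ∨
      (P ![1, 0] = ![0, 0] ∧ P ![0, 1] = ![c, -I * c]) ∨
      (P ![1, 0] = ![-(lam / 2), I * lam / 2] ∧ P ![0, 1] = ![-I * lam / 2, -(lam / 2)]) ∨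
      (P ![1, 0] = ![-(lam / 2), -I * lam / 2] ∧ P ![0, 1] = ![I * lam / 2, -(lam / 2)]) ∨
      (P ![1, 0] = ![-lam, 0] ∧ P ![0, 1] = ![c, -lam + I * c]) ∨
      (P ![1, 0] = ![-lam, 0] ∧ P ![0, 1] = ![c, -lam - I * c]) := by
  rw [isRotaBaxter_E2_iff_eqns, e2RotaBaxterEqns_iff]
  simp only [funext_iff, Fin.forall_fin_two, cons_val_zero, cons_val_one, cons_val_fin_one]
  grind

/-- Rota–Baxter operators of weight 1 on `E₂` (`e₁e₁ = e₁, e₂e₂ = e₁`). -/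
theorem rb_weight1_E2 (P : (Fin 2 → ℂ) →ₗ[ℂ] (Fin 2 → ℂ)) :
    IsRotaBaxter !![1, 0; 1, 0] 1 P ↔
      ∃ c : ℂ,
        (P ![1, 0] = ![0, 0] ∧ P ![0, 1] = ![c, Complex.I * c]) ∨
        (P ![1, 0] = ![0, 0] ∧ P ![0, 1] = ![c, -Complex.I * c]) ∨
        (P ![1, 0] = ![-(1/2), Complex.I/2] ∧ P ![0, 1] = ![-Complex.I/2, -(1/2)]) ∨
        (P ![1, 0] = ![-(1/2), -Complex.I/2] ∧ P ![0, 1] = ![Complex.I/2, -(1/2)]) ∨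
        (P ![1, 0] = ![-1, 0] ∧ P ![0, 1] = ![c, -1 + Complex.I * c]) ∨
        (P ![1, 0] = ![-1, 0] ∧ P ![0, 1] = ![c, -1 - Complex.I * c]) := by
  simpa only [mul_one] using isRotaBaxter_E2_iff 1 P
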